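/- arXiv:2207.09787 — 2 statements merged into one kernel-verified Lean document; each statement's English description precedes it below -/
import Mathlib

section
/- The theory T is consistent, i.e., T has a model. -/
open FirstOrder FirstOrder.Language

namespace BPPaper

/-- The function symbols of the four-sorted language `L`, implemented one-sortedly:
constants `g_T`, `r` (tree sort), `g_L`, `0` (level sort); unary functions
`pred_T`, `pred_L`, the level maps `ℓ_T`, `ℓ_A`, `ℓ_B`; binary functions
`⊓` (the meet of the tree) and `f : A × B → T`. -/
inductive TFunc : ℕ → Type
  | gT : TFunc 0
  | root : TFunc 0
  | gL : TFunc 0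
  | zero : TFunc 0
  | predT : TFunc 1
  | predL : TFunc 1
  | ellT : TFunc 1
  | ellA : TFunc 1
  | ellB : TFunc 1
  | meet : TFunc 2
  | app : TFunc 2

/-- The relation symbols of `L`: unary predicates carving out the four sorts
`A`, `B`, `T`, `L`, and the two orders `≤_T` and `≤_L`. -/
inductive TRel : ℕ → Type
  | sortA : TRel 1
  | sortB : TRel 1
  | sortT : TRel 1
  | sortL : TRel 1
  | leT : TRel 2
  | leL : TRel 2

/-- The language `L` of the paper (sorts implemented as unary predicates). -/
def tLang : Language := ⟨TFunc, TRel⟩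

/-- Raw interpretation data for an `L`-structure. -/
class TOps (M : Type*) where
  SA : M → Prop
  SB : M → Prop
  ST : M → Prop
  SL : M → Prop
  leT : M → M → Prop
  leL : M → M → Prop
  meet : M → M → M
  app : M → M → M
  predT : M → M
  predL : M → M
  lT : M → M
  lA : M → M
  lB : M → M
  gT : M
  root : M
  gL : M
  zero : M

open TOps

instance tStructure (M : Type*) [TOps M] : tLang.Structure M where
  funMap {_n} f x :=
    match f with
    | .gT => gT
    | .root => root
    | .gL => gL
    | .zero => zero
    | .predT => predT (x 0)
    | .predL => predL (x 0)
    | .ellT => lT (x 0)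
    | .ellA => lA (x 0)
    | .ellB => lB (x 0)
    | .meet => meet (x 0) (x 1)
    | .app => app (x 0) (x 1)
  RelMap {_n} r x :=
    match r with
    | .sortA => SA (x 0)
    | .sortB => SB (x 0)
    | .sortT => ST (x 0)
    | .sortL => SL (x 0)
    | .leT => leT (x 0) (x 1)
    | .leL => leL (x 0) (x 1)

/-- The theory `T` of the paper, given by its (semantically presented) axioms (i)–(viii).
The four sorts partition the universe; all function symbols take the garbage/default
values specified below outside of their intended domains. -/
class TModel (M : Type*) extends TOps M where
  -- the four sorts partition the universe, and the constants lie in the correct sorts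
  sorts_cover : ∀ x : M, SA x ∨ SB x ∨ ST x ∨ SL x
  disj_AB : ∀ x : M, ¬(SA x ∧ SB x)
  disj_AT : ∀ x : M, ¬(SA x ∧ ST x)
  disj_AL : ∀ x : M, ¬(SA x ∧ SL x)
  disj_BT : ∀ x : M, ¬(SB x ∧ ST x)
  disj_BL : ∀ x : M, ¬(SB x ∧ SL x)
  disj_TL : ∀ x : M, ¬(ST x ∧ SL x)
  gT_sort : ST (gT : M)
  root_sort : ST (root : M)
  gL_sort : SL (gL : M)
  zero_sort : SL (zero : M)
  -- (i) `(L ∖ {g_L}, ≤_L)` is a discrete linear order with least element `0`, no greatest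
  -- element, and predecessor function `pred_L`; the garbage point `g_L` is unrelated to
  -- everything and `pred_L (g_L) = g_L`.
  zero_ne_gL : (zero : M) ≠ gL
  leL_dom : ∀ x y : M, leL x y → (SL x ∧ x ≠ gL ∧ SL y ∧ y ≠ gL)
  leL_refl : ∀ x : M, SL x → x ≠ gL → leL x x
  leL_antisymm : ∀ x y : M, leL x y → leL y x → x = y
  leL_trans : ∀ x y z : M, leL x y → leL y z → leL x z
  leL_total : ∀ x y : M, SL x → x ≠ gL → SL y → y ≠ gL → leL x y ∨ leL y x
  zero_least : ∀ x : M, SL x → x ≠ gL → leL zero x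
  leL_no_max : ∀ x : M, SL x → x ≠ gL → ∃ y : M, SL y ∧ y ≠ gL ∧ leL x y ∧ y ≠ x
  predL_zero : predL (zero : M) = zero
  predL_gL : predL (gL : M) = gL
  predL_junk : ∀ x : M, ¬SL x → predL x = gL
  predL_spec : ∀ x : M, SL x → x ≠ gL → x ≠ zero →
    SL (predL x) ∧ predL x ≠ gL ∧ leL (predL x) x ∧ predL x ≠ x ∧
      ∀ y : M, leL y x → y = x ∨ leL y (predL x)
  succL_exists : ∀ x : M, SL x → x ≠ gL →
    ∃ y : M, SL y ∧ y ≠ gL ∧ y ≠ zero ∧ predL y = x ∧ y ≠ x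
  -- (ii) `(T ∖ {g_T}, ≤_T, ⊓)` is a meet-tree with root `r` and binary ramification, in
  -- which the set of predecessors of any element is a discrete linear order with
  -- predecessor function `pred_T`; the garbage point `g_T` is unrelated to everything.
  root_ne_gT : (root : M) ≠ gT
  leT_dom : ∀ x y : M, leT x y → (ST x ∧ x ≠ gT ∧ ST y ∧ y ≠ gT)
  leT_refl : ∀ x : M, ST x → x ≠ gT → leT x x
  leT_antisymm : ∀ x y : M, leT x y → leT y x → x = y
  leT_trans : ∀ x y z : M, leT x y → leT y z → leT x z
  root_least : ∀ x : M, ST x → x ≠ gT → leT root x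
  pred_linear : ∀ x y z : M, leT y x → leT z x → leT y z ∨ leT z y
  meet_spec : ∀ x y : M, ST x → x ≠ gT → ST y → y ≠ gT →
    ST (meet x y) ∧ meet x y ≠ gT ∧ leT (meet x y) x ∧ leT (meet x y) y ∧
      ∀ w : M, leT w x → leT w y → leT w (meet x y)
  meet_junk : ∀ x y : M, ¬(ST x ∧ x ≠ gT ∧ ST y ∧ y ≠ gT) → meet x y = gT
  predT_root : predT (root : M) = root
  predT_gT : predT (gT : M) = gT
  predT_junk : ∀ x : M, ¬ST x → predT x = gT
  predT_spec : ∀ x : M, ST x → x ≠ gT → x ≠ root →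
    ST (predT x) ∧ predT x ≠ gT ∧ leT (predT x) x ∧ predT x ≠ x ∧
      ∀ y : M, leT y x → y = x ∨ leT y (predT x)
  ramification : ∀ x : M, ST x → x ≠ gT →
    ∃ y z : M, y ≠ z ∧ (ST y ∧ y ≠ gT ∧ predT y = x ∧ y ≠ x) ∧
      (ST z ∧ z ≠ gT ∧ predT z = x ∧ z ≠ x) ∧
      ∀ w : M, ST w → w ≠ gT → predT w = x → w ≠ x → w = y ∨ w = z
  -- (iii) `ℓ_T` is a surjective level function `T ∖ {g_T} → L ∖ {g_L}` which, on the set of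
  -- predecessors of any fixed `t`, is an order isomorphism onto an initial segment of
  -- `L ∖ {g_L}`; moreover every element of the tree has extensions to all higher levels.
  lT_gT : lT (gT : M) = gL
  lT_junk : ∀ x : M, ¬ST x → lT x = gL
  lT_sort : ∀ x : M, ST x → x ≠ gT → SL (lT x) ∧ lT x ≠ gL
  lT_surj : ∀ c : M, SL c → c ≠ gL → ∃ x : M, ST x ∧ x ≠ gT ∧ lT x = c
  lT_mono : ∀ t y z : M, leT y t → leT z t → (leT y z ↔ leL (lT y) (lT z))
  lT_initial : ∀ t c : M, ST t → t ≠ gT → leL c (lT t) → ∃ y : M, leT y t ∧ lT y = c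
  lT_ext : ∀ t c : M, ST t → t ≠ gT → leL (lT t) c → ∃ t' : M, leT t t' ∧ lT t' = c
  -- (iv) `g_L` is not in the image of `ℓ_A` nor of `ℓ_B` (on the sorts `A`, `B`)
  lA_sort : ∀ a : M, SA a → SL (lA a) ∧ lA a ≠ gL
  lA_junk : ∀ x : M, ¬SA x → lA x = gL
  lB_sort : ∀ b : M, SB b → SL (lB b) ∧ lB b ≠ gL
  lB_junk : ∀ x : M, ¬SB x → lB x = gL
  -- (v) all fibers of `ℓ_A` and `ℓ_B` over `L ∖ {g_L}` are infinite
  fiberA_infinite : ∀ c : M, SL c → c ≠ gL → {a : M | SA a ∧ lA a = c}.Infinite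
  fiberB_infinite : ∀ c : M, SL c → c ≠ gL → {b : M | SB b ∧ lB b = c}.Infinite
  -- (vi) `f(a,b) = g_T` if and only if `ℓ_A(a) ≠ ℓ_B(b)`
  app_eq_gT_iff : ∀ a b : M, SA a → SB b → (app a b = gT ↔ lA a ≠ lB b)
  app_junk : ∀ a b : M, ¬(SA a ∧ SB b) → app a b = gT
  -- (vii) if `ℓ_A(a) = ℓ_B(b)` then `ℓ_T(f(a,b)) = ℓ_A(a)`
  app_level : ∀ a b : M, SA a → SB b → lA a = lB b →
    ST (app a b) ∧ lT (app a b) = lA a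
  -- (viii) at each level, `f` is a generic surjection
  generic_B : ∀ c : M, SL c → c ≠ gL → ∀ (n : ℕ) (t a : Fin n → M),
    (∀ i, ST (t i) ∧ t i ≠ gT ∧ lT (t i) = c) → (∀ i, SA (a i) ∧ lA (a i) = c) →
    Function.Injective a → {b : M | SB b ∧ ∀ i, app (a i) b = t i}.Infinite
  generic_A : ∀ c : M, SL c → c ≠ gL → ∀ (n : ℕ) (t b : Fin n → M),
    (∀ i, ST (t i) ∧ t i ≠ gT ∧ lT (t i) = c) → (∀ i, SB (b i) ∧ lB (b i) = c) →
    Function.Injective b → {a : M | SA a ∧ ∀ i, app a (b i) = t i}.Infinite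

/-- The theory `T`: the set of `L`-sentences true in every structure satisfying the
axioms (i)–(viii) above. -/
def tTheory : tLang.Theory := {φ : tLang.Sentence | ∀ (M : Type) [TModel M], M ⊨ φ}


/-!
A model is built by hand. The levels are `ℕ`, the tree is the binary tree of finite bit strings
under the prefix order (meet = longest common prefix, level = length), and the elements of `A` and
of `B` at level `c` are pairs `(c, k)` with an index `k : ℕ`. For `f`, a natural number `m` is read
as the code of a finite table of bit strings; `f((c, k), (c, m))` is the entry at the smaller of
`k`, `m` of the table coded by the larger, padded or truncated to length `c`. Genericity (viii)
holds because any finitely many prescribed entries at distinct indices are the entries of the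
tables coded by infinitely many (larger) indices.
-/

end BPPaper

namespace List

variable {α : Type*}

theorem prefix_dropLast_of_prefix_of_ne {w s : List α} (h : w <+: s) (hne : w ≠ s) :
    w <+: s.dropLast := by
  have hs : s ≠ [] := by rintro rfl; exact hne (prefix_nil.mp h)
  rw [← dropLast_concat_getLast hs, prefix_concat_iff, dropLast_concat_getLast hs] at h
  exact h.resolve_left hne

theorem dropLast_ne_self {l : List α} (hl : l ≠ []) : l.dropLast ≠ l := fun h => by
  have := congrArg length h
  rw [length_dropLast] at this
  have := length_pos_iff.mpr hl
  omega

theorem exists_eq_concat_of_dropLast_eq {w s : List α} (h : w.dropLast = s) (hne : w ≠ s) :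
    ∃ a, w = s ++ [a] := by
  have hw : w ≠ [] := by rintro rfl; exact hne h
  exact ⟨w.getLast hw, by rw [← h, dropLast_concat_getLast]⟩

variable [DecidableEq α]

def commonPrefix : List α → List α → List α
  | x :: xs, y :: ys => if x = y then x :: commonPrefix xs ys else []
  | _, _ => []

theorem commonPrefix_prefix_left : ∀ s t : List α, commonPrefix s t <+: s
  | x :: xs, y :: ys => by
    unfold commonPrefix
    split_ifs
    · exact cons_prefix_cons.2 ⟨rfl, commonPrefix_prefix_left xs ys⟩
    · exact nil_prefix
  | [], _ | _ :: _, [] => by simp [commonPrefix]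

theorem commonPrefix_prefix_right : ∀ s t : List α, commonPrefix s t <+: t
  | x :: xs, y :: ys => by
    unfold commonPrefix
    split_ifs with h
    · exact cons_prefix_cons.2 ⟨h, commonPrefix_prefix_right xs ys⟩
    · exact nil_prefix
  | [], _ | _ :: _, [] => by simp [commonPrefix]

theorem prefix_commonPrefix : ∀ {w s t : List α}, w <+: s → w <+: t → w <+: commonPrefix s t
  | [], _, _, _, _ => nil_prefix
  | _ :: _, [], _, hs, _ => by simp at hs
  | _ :: _, _ :: _, [], _, ht => by simp at ht
  | _ :: _, _ :: _, _ :: _, hs, ht => by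
    rw [cons_prefix_cons] at hs ht
    obtain ⟨rfl, hs⟩ := hs
    obtain ⟨rfl, ht⟩ := ht
    simpa [commonPrefix] using prefix_commonPrefix hs ht

end List

namespace BPPaper

section GenericTable

variable {α : Type*} [Encodable α] [Inhabited α]

def tableEntry (m j : ℕ) : α :=
  ((Encodable.decode (α := List α) m.unpair.1).getD []).getD j default

theorem tableEntry_pair (u : List α) (N j : ℕ) :
    tableEntry (Nat.pair (Encodable.encode u) N) j = u.getD j default := by
  simp [tableEntry]

def genericFun (k m : ℕ) : α := tableEntry (max k m) (min k m)

theorem genericFun_comm (k m : ℕ) : (genericFun k m : α) = genericFun m k := by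
  rw [genericFun, genericFun, max_comm, min_comm]

theorem infinite_setOf_forall_genericFun_eq {ι : Type*} [Finite ι] {k : ι → ℕ}
    (hk : Function.Injective k) (s : ι → α) :
    {m : ℕ | ∀ i, genericFun (k i) m = s i}.Infinite := by
  obtain ⟨K, hK⟩ := (Set.finite_range k).bddAbove
  let u : List α := (List.range (K + 1)).map (Function.extend k s default)
  refine Set.infinite_of_injective_forall_mem
    (f := fun N => Nat.pair (Encodable.encode u) (K + 1 + N)) ?_ fun N i => ?_
  · intro N N' h
    have := (Nat.pair_eq_pair.mp h).2
    omega
  · have hki : k i < K + 1 := Nat.lt_succ_of_le (hK (Set.mem_range_self i))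
    have hlt : k i ≤ Nat.pair (Encodable.encode u) (K + 1 + N) := by
      have := Nat.right_le_pair (Encodable.encode u) (K + 1 + N)
      omega
    simp only [genericFun, max_eq_right hlt, min_eq_left hlt, tableEntry_pair, u,
      List.getD_eq_getElem?_getD, List.getElem?_map, List.getElem?_range hki, Option.map_some,
      Option.getD_some, hk.extend_apply]

end GenericTable

inductive StdModel : Type
  | garbageT
  | garbageL
  | level (n : ℕ)
  | node (s : List Bool)
  | elemA (c k : ℕ)
  | elemB (c k : ℕ)

namespace StdModel

@[simps]
instance : TOps StdModel where
  SA | elemA _ _ => True | _ => False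
  SB | elemB _ _ => True | _ => False
  ST | garbageT | node _ => True | _ => False
  SL | garbageL | level _ => True | _ => False
  leT | node s, node t => s <+: t | _, _ => False
  leL | level m, level n => m ≤ n | _, _ => False
  meet | node s, node t => node (s.commonPrefix t) | _, _ => garbageT
  app
    | elemA c k, elemB c' m =>
      if c = c' then node ((genericFun k m : List Bool).takeD c false) else garbageT
    | _, _ => garbageT
  predT | node s => node s.dropLast | _ => garbageT
  predL | level n => level (n - 1) | _ => garbageL
  lT | node s => level s.length | _ => garbageL
  lA | elemA c _ => level c | _ => garbageL
  lB | elemB c _ => level c | _ => garbageL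
  gT := garbageT
  root := node []
  gL := garbageL
  zero := level 0

open TOps

theorem exists_node_of_lT_eq {x : StdModel} {n : ℕ} (hx : lT x = level n) :
    ∃ s : List Bool, x = node s ∧ s.length = n := by
  cases x <;> simp_all

theorem exists_elemA_of_lA_eq {a : StdModel} {n : ℕ} (ha : lA a = level n) :
    ∃ k, a = elemA n k := by
  cases a <;> simp_all

theorem exists_elemB_of_lB_eq {b : StdModel} {n : ℕ} (hb : lB b = level n) :
    ∃ m, b = elemB n m := by
  cases b <;> simp_all

theorem infinite_setOf_app_elemA_eq {n : ℕ} {ι : Type*} [Finite ι] {s : ι → List Bool}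
    (hs : ∀ i, (s i).length = n) {k : ι → ℕ} (hk : Function.Injective k) :
    {b : StdModel | SB b ∧ ∀ i, app (elemA n (k i)) b = node (s i)}.Infinite := by
  refine ((infinite_setOf_forall_genericFun_eq hk s).image (f := elemB n)
    fun _ _ _ _ h => (elemB.inj h).2).mono ?_
  rintro _ ⟨m, hm, rfl⟩
  refine ⟨trivial, fun i => ?_⟩
  simp [hm i, List.takeD_eq_take _ (hs i).ge, List.take_of_length_le (hs i).le]

theorem infinite_setOf_app_elemB_eq {n : ℕ} {ι : Type*} [Finite ι] {s : ι → List Bool}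
    (hs : ∀ i, (s i).length = n) {m : ι → ℕ} (hm : Function.Injective m) :
    {a : StdModel | SA a ∧ ∀ i, app a (elemB n (m i)) = node (s i)}.Infinite := by
  refine ((infinite_setOf_forall_genericFun_eq hm s).image (f := elemA n)
    fun _ _ _ _ h => (elemA.inj h).2).mono ?_
  rintro _ ⟨k, hk, rfl⟩
  refine ⟨trivial, fun i => ?_⟩
  simp [genericFun_comm k, hk i, List.takeD_eq_take _ (hs i).ge, List.take_of_length_le (hs i).le]

instance : TModel StdModel where
  sorts_cover x := by cases x <;> simp
  disj_AB x := by cases x <;> simp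
  disj_AT x := by cases x <;> simp
  disj_AL x := by cases x <;> simp
  disj_BT x := by cases x <;> simp
  disj_BL x := by cases x <;> simp
  disj_TL x := by cases x <;> simp
  gT_sort := trivial
  root_sort := trivial
  gL_sort := trivial
  zero_sort := trivial
  zero_ne_gL := by simp
  leL_dom x y _ := by cases x <;> cases y <;> simp_all
  leL_refl x _ _ := by cases x <;> simp_all
  leL_antisymm x y _ _ := by cases x <;> cases y <;> simp_all; omega
  leL_trans x y z _ _ := by cases x <;> cases y <;> cases z <;> simp_all; omega
  leL_total x y _ _ _ _ := by cases x <;> cases y <;> simp_all; omega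
  zero_least x _ _ := by cases x <;> simp_all
  leL_no_max x _ _ := by
    cases x <;> simp_all
    case level n => exact ⟨level (n + 1), by simp⟩
  predL_zero := rfl
  predL_gL := rfl
  predL_junk x _ := by cases x <;> simp_all
  predL_spec x _ _ _ := by
    cases x <;> simp_all
    case level n =>
      refine ⟨by omega, fun y hy => ?_⟩
      cases y <;> simp_all
      omega
  succL_exists x _ _ := by
    cases x <;> simp_all
    case level n => exact ⟨level (n + 1), by simp⟩
  root_ne_gT := by simp
  leT_dom x y _ := by cases x <;> cases y <;> simp_all
  leT_refl x _ _ := by cases x <;> simp_all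
  leT_antisymm x y h h' := by
    cases x <;> cases y <;> simp_all
    exact h.eq_of_length (h.length_le.antisymm h'.length_le)
  leT_trans x y z h h' := by
    cases x <;> cases y <;> cases z <;> simp_all
    exact h.trans h'
  root_least x _ _ := by cases x <;> simp_all
  pred_linear x y z h h' := by
    cases x <;> cases y <;> cases z <;> simp_all
    exact List.prefix_or_prefix_of_prefix h h'
  meet_spec x y _ _ _ _ := by
    cases x <;> cases y <;> simp_all
    case node s t =>
      refine ⟨s.commonPrefix_prefix_left t, s.commonPrefix_prefix_right t, fun w hw hw' => ?_⟩
      cases w <;> simp_all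
      exact List.prefix_commonPrefix hw hw'
  meet_junk x y _ := by cases x <;> cases y <;> simp_all
  predT_root := rfl
  predT_gT := rfl
  predT_junk x _ := by cases x <;> simp_all
  predT_spec x _ _ _ := by
    cases x <;> simp_all
    case node s hs =>
      refine ⟨s.dropLast_prefix, ?_, fun y hy => ?_⟩
      · exact List.dropLast_ne_self hs
      · cases y <;> simp_all
        case node w => exact (em (w = s)).imp_right (List.prefix_dropLast_of_prefix_of_ne hy)
  ramification x _ _ := by
    cases x <;> simp_all
    case node s =>
      refine ⟨node (s ++ [false]), node (s ++ [true]), by simp, by simp, by simp,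
        fun w _ _ hpred hne => ?_⟩
      cases w <;> simp_all
      case node w =>
        obtain ⟨_ | _, rfl⟩ := List.exists_eq_concat_of_dropLast_eq hpred hne <;> simp
  lT_gT := rfl
  lT_junk x _ := by cases x <;> simp_all
  lT_sort x _ _ := by cases x <;> simp_all
  lT_surj c _ _ := by
    cases c <;> simp_all
    case level n => exact ⟨node (List.replicate n false), by simp⟩
  lT_mono t y z hy hz := by
    cases t <;> cases y <;> cases z <;> simp_all
    exact ⟨List.IsPrefix.length_le, List.prefix_of_prefix_length_le hy hz⟩
  lT_initial t c _ _ _ := by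
    cases t <;> cases c <;> simp_all
    rename_i s n _
    exact ⟨node (s.take n), s.take_prefix n, by simp; omega⟩
  lT_ext t c _ _ _ := by
    cases t <;> cases c <;> simp_all
    rename_i s n _
    exact ⟨node (s ++ List.replicate (n - s.length) false), s.prefix_append _, by simp; omega⟩
  lA_sort a _ := by cases a <;> simp_all
  lA_junk x _ := by cases x <;> simp_all
  lB_sort b _ := by cases b <;> simp_all
  lB_junk x _ := by cases x <;> simp_all
  fiberA_infinite c _ _ := by
    obtain ⟨n, rfl⟩ : ∃ n, c = level n := by cases c <;> simp_all
    exact Set.infinite_of_injective_forall_mem (f := elemA n) (fun _ _ h => (elemA.inj h).2)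
      fun _ => by simp
  fiberB_infinite c _ _ := by
    obtain ⟨n, rfl⟩ : ∃ n, c = level n := by cases c <;> simp_all
    exact Set.infinite_of_injective_forall_mem (f := elemB n) (fun _ _ h => (elemB.inj h).2)
      fun _ => by simp
  app_eq_gT_iff a b _ _ := by cases a <;> cases b <;> simp_all
  app_junk a b _ := by cases a <;> cases b <;> simp_all
  app_level a b _ _ _ := by cases a <;> cases b <;> simp_all
  generic_B c hc hc' n t a ht ha hinj := by
    obtain ⟨l, rfl⟩ : ∃ l, c = level l := by cases c <;> simp_all
    choose s hts hs using fun i => exists_node_of_lT_eq (ht i).2.2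
    choose k hak using fun i => exists_elemA_of_lA_eq (ha i).2
    obtain rfl : t = fun i => node (s i) := funext hts
    obtain rfl : a = fun i => elemA l (k i) := funext hak
    exact infinite_setOf_app_elemA_eq hs fun i j h => hinj (by simp [h])
  generic_A c hc hc' n t b ht hb hinj := by
    obtain ⟨l, rfl⟩ : ∃ l, c = level l := by cases c <;> simp_all
    choose s hts hs using fun i => exists_node_of_lT_eq (ht i).2.2
    choose m hbm using fun i => exists_elemB_of_lB_eq (hb i).2
    obtain rfl : t = fun i => node (s i) := funext hts
    obtain rfl : b = fun i => elemB l (m i) := funext hbm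
    exact infinite_setOf_app_elemB_eq hs fun i j h => hinj (by simp [h])

end StdModel

/-- **The theory `T` is consistent**: it has a model. -/
theorem tTheory_isSatisfiable : tTheory.IsSatisfiable :=
  have : Nonempty StdModel := ⟨.garbageT⟩
  have : StdModel ⊨ tTheory := ⟨fun _ hφ => hφ StdModel⟩
  Theory.Model.isSatisfiable StdModel

end BPPaper
end

section
/- The theory T does not have uniform definability of types: there is an L-formula φ(v; w) for which there is no single L-formula ψ(w; u) such that every global φ-type definable over a model M of T has a φ-definition of the form ψ(w; c) for some tuple c from M. -/
open FirstOrder FirstOrder.Language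

namespace BPPaper

open TOps

/-!
STATEMENT 14: The theory `T` does not have uniform definability of types: there is an
`L`-formula `φ(v; w)` for which there is no single `L`-formula `ψ(w; u)` such that every
global `φ`-type definable over a model `M` of `T` has a `φ`-definition of the form
`ψ(w; c)` for some tuple `c` from `M`.

A (complete, global) `φ`-type over a model `M` is rendered by the set `q` of parameter
tuples `b` from `M` at which `φ` belongs to the type; consistency with the elementary
diagram of `M` amounts (that theory being complete) to the condition that every finite
positive-negative pattern from `q` is realized in `M`.  The type is definable exactly when
`q` is a definable subset of `M`.
-/

/-- `q` is (the positive part of) a complete global `φ`-type over the model `M`. -/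
def IsPhiType (M : Type) [TModel M] {n m : ℕ} (φ : tLang.Formula (Fin n ⊕ Fin m))
    (q : Set (Fin m → M)) : Prop :=
  ∀ F G : Finset (Fin m → M), ↑F ⊆ q → (∀ b ∈ G, b ∉ q) →
    ∃ v : Fin n → M, (∀ b ∈ F, φ.Realize (Sum.elim v b)) ∧
      (∀ b ∈ G, ¬ φ.Realize (Sum.elim v b))

/-!
Take `φ(v₀, v₁; w) := f(v₀, w) = f(v₁, w) ≠ g_T`. In the countable model in which every level
of `f` is given by one generic matrix (each finite pattern of entries on finitely many
columns is realised by infinitely many rows, and vice versa), the set of level-one columns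
`w` with `f(A 1 r, w) = [false]` for all `r` in a finite set `R` is a definable `φ`-type: two
fresh rows agreeing or disagreeing on prescribed columns realise any finite part of it.
If `ψ(w; c)` with `u` parameters defined all of these types, take `|R| = u + 1`. Some `r ∈ R`
does not index a parameter, and by back-and-forth the generic matrix has an automorphism
fixing the indices of the parameters and sending a fresh row `a` to `r`. The induced
automorphism of the model fixes `c` but moves a column of the type for `R` on which row `a`
takes the value `[true]` out of that type, which is absurd for a set defined over `c`.
-/

section GenericMatrix

variable {α β γ : Type*}

def IsRowGeneric (C : α → β → γ) : Prop :=
  ∀ (s : Finset β) (c : β → γ), {a | ∀ b ∈ s, C a b = c b}.Infinite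

def IsGeneric (C : α → β → γ) : Prop :=
  IsRowGeneric C ∧ IsRowGeneric (flip C)

/-- Entry `(i, j)` with `i < j` is read off from the list coded by `(Nat.unpair j).1`, and
symmetrically; so a finite pattern on the rows below `j` is realised by every `j` coding it. -/
def genericMatrix (i j : ℕ) : ℕ :=
  if i < j then (Denumerable.ofNat (List ℕ) j.unpair.1).getD i 0
  else (Denumerable.ofNat (List ℕ) i.unpair.1).getD j 0

lemma genericMatrix_comm (i j : ℕ) : genericMatrix i j = genericMatrix j i := by
  unfold genericMatrix
  rcases lt_trichotomy i j with h | rfl | h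
  · simp [h, h.not_gt]
  · rfl
  · simp [h, h.not_gt]

lemma isRowGeneric_genericMatrix : IsRowGeneric genericMatrix := by
  intro s c
  refine Set.infinite_of_forall_exists_gt fun n => ?_
  set m := max n (s.sup id) + 1
  have hm : m ≤ Nat.pair (Encodable.encode ((List.range m).map c)) m := Nat.right_le_pair _ _
  refine ⟨_, fun b hb => ?_, (Nat.lt_succ_of_le (le_max_left _ _)).trans_le hm⟩
  have hbm : b < m := Nat.lt_succ_of_le ((Finset.le_sup (f := id) hb).trans (le_max_right _ _))
  simp [genericMatrix, (hbm.trans_le hm).not_gt, hbm]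

lemma isGeneric_genericMatrix : IsGeneric genericMatrix := by
  have : flip genericMatrix = genericMatrix := funext₂ fun i j => genericMatrix_comm j i
  exact ⟨isRowGeneric_genericMatrix, this ▸ isRowGeneric_genericMatrix⟩

end GenericMatrix

section BackAndForth

variable {α β γ : Type*}

lemma exists_equiv_of_graph {α' : Type*} {R : Set (α × α')}
    (hR : ∀ p ∈ R, ∀ q ∈ R, p.1 = q.1 ↔ p.2 = q.2) (h₁ : ∀ a, ∃ a', (a, a') ∈ R)
    (h₂ : ∀ a', ∃ a, (a, a') ∈ R) : ∃ e : α ≃ α', ∀ p ∈ R, e p.1 = p.2 := by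
  choose f hf using h₁
  have hf_bij : Function.Bijective f := by
    refine ⟨fun a b hab => (hR _ (hf a) _ (hf b)).2 hab, fun a' => ?_⟩
    obtain ⟨a, ha⟩ := h₂ a'
    exact ⟨a, (hR _ (hf a) _ ha).1 rfl⟩
  exact ⟨Equiv.ofBijective f hf_bij, fun p hp => (hR _ (hf p.1) _ hp).1 rfl⟩

structure FinPartialIso (C : α → β → γ) where
  rows : Set (α × α)
  cols : Set (β × β)
  rows_finite : rows.Finite
  cols_finite : cols.Finite
  rows_bij : ∀ p ∈ rows, ∀ q ∈ rows, p.1 = q.1 ↔ p.2 = q.2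
  cols_bij : ∀ p ∈ cols, ∀ q ∈ cols, p.1 = q.1 ↔ p.2 = q.2
  map_entry : ∀ p ∈ rows, ∀ q ∈ cols, C p.2 q.2 = C p.1 q.1

namespace FinPartialIso

variable {C : α → β → γ}

instance : Preorder (FinPartialIso C) := Preorder.lift fun f => (f.rows, f.cols)

lemma le_def {f g : FinPartialIso C} : f ≤ g ↔ f.rows ⊆ g.rows ∧ f.cols ⊆ g.cols := Iff.rfl

def symm (f : FinPartialIso C) : FinPartialIso C where
  rows := Prod.swap ⁻¹' f.rows
  cols := Prod.swap ⁻¹' f.cols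
  rows_finite := f.rows_finite.preimage Prod.swap_injective.injOn
  cols_finite := f.cols_finite.preimage Prod.swap_injective.injOn
  rows_bij _ hp _ hq := (f.rows_bij _ hp _ hq).symm
  cols_bij _ hp _ hq := (f.cols_bij _ hp _ hq).symm
  map_entry _ hp _ hq := (f.map_entry _ hp _ hq).symm

def transpose (f : FinPartialIso C) : FinPartialIso (flip C) where
  rows := f.cols
  cols := f.rows
  rows_finite := f.cols_finite
  cols_finite := f.rows_finite
  rows_bij := f.cols_bij
  cols_bij := f.rows_bij
  map_entry p hp q hq := f.map_entry q hq p hp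

lemma le_symm_iff {f g : FinPartialIso C} : f ≤ g.symm ↔ f.symm ≤ g := by
  simp only [le_def, symm, ← Set.image_swap_eq_preimage_swap, Set.image_subset_iff]

lemma isCofinal_mem_rows (hC : IsRowGeneric C) (a : α) :
    IsCofinal {f : FinPartialIso C | ∃ a', (a, a') ∈ f.rows} := by
  classical
  intro f
  by_cases ha : ∃ a', (a, a') ∈ f.rows
  · exact ⟨f, ha, le_rfl⟩
  push Not at ha
  -- the new row `a'` has to copy, on each column `b'` in the range of `f`, row `a` at `f⁻¹ b'`
  let c : β → γ := fun b' => C a (if h : ∃ q ∈ f.cols, q.2 = b' then h.choose.1 else b')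
  obtain ⟨a', ha'c, ha'⟩ := (hC (f.cols_finite.image Prod.snd).toFinset c).exists_notMem_finset
    (f.rows_finite.image Prod.snd).toFinset
  simp only [Set.Finite.mem_toFinset, Set.mem_image, not_exists, not_and, Set.mem_ofPred_eq,
    forall_exists_index, and_imp] at ha'c ha'
  have hfresh : ∀ q ∈ f.rows, ¬(a = q.1 ∨ a' = q.2) := by
    rintro ⟨b, b'⟩ hq (rfl | rfl)
    · exact ha _ hq
    · exact ha' _ hq rfl
  have hentry : ∀ q ∈ f.cols, C a' q.2 = C a q.1 := by
    intro q hq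
    have h : ∃ q' ∈ f.cols, q'.2 = q.2 := ⟨q, hq, rfl⟩
    rw [ha'c _ q hq rfl]
    dsimp only [c]
    rw [dif_pos h, (f.cols_bij _ h.choose_spec.1 _ hq).2 h.choose_spec.2]
  refine ⟨⟨insert (a, a') f.rows, f.cols, f.rows_finite.insert _, f.cols_finite, ?_, f.cols_bij,
    ?_⟩, ⟨a', Set.mem_insert _ _⟩, Set.subset_insert _ _, subset_rfl⟩
  · rintro p (rfl | hp) q (rfl | hq)
    · exact iff_of_true rfl rfl
    · exact iff_of_false (fun h => hfresh q hq (.inl h)) (fun h => hfresh q hq (.inr h))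
    · exact iff_of_false (fun h => hfresh p hp (.inl h.symm)) (fun h => hfresh p hp (.inr h.symm))
    · exact f.rows_bij p hp q hq
  · rintro p (rfl | hp) q hq
    · exact hentry q hq
    · exact f.map_entry p hp q hq

lemma isCofinal_mem_rows_snd (hC : IsRowGeneric C) (a' : α) :
    IsCofinal {f : FinPartialIso C | ∃ a, (a, a') ∈ f.rows} := by
  intro f
  obtain ⟨g, ⟨a, ha⟩, hfg⟩ := isCofinal_mem_rows hC a' f.symm
  exact ⟨g.symm, ⟨a, ha⟩, le_symm_iff.2 hfg⟩

lemma isCofinal_mem_cols (hC : IsRowGeneric (flip C)) (b : β) :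
    IsCofinal {f : FinPartialIso C | ∃ b', (b, b') ∈ f.cols} := by
  intro f
  obtain ⟨g, hg, hfg⟩ := isCofinal_mem_rows hC b f.transpose
  exact ⟨g.transpose, hg, hfg.2, hfg.1⟩

lemma isCofinal_mem_cols_snd (hC : IsRowGeneric (flip C)) (b' : β) :
    IsCofinal {f : FinPartialIso C | ∃ b, (b, b') ∈ f.cols} := by
  intro f
  obtain ⟨g, hg, hfg⟩ := isCofinal_mem_rows_snd hC b' f.transpose
  exact ⟨g.transpose, hg, hfg.2, hfg.1⟩

lemma exists_equiv_of_ideal (I : Order.Ideal (FinPartialIso C))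
    (hrows : ∀ a, ∃ a', ∃ f ∈ I, (a, a') ∈ f.rows) (hrows' : ∀ a', ∃ a, ∃ f ∈ I, (a, a') ∈ f.rows)
    (hcols : ∀ b, ∃ b', ∃ f ∈ I, (b, b') ∈ f.cols) (hcols' : ∀ b', ∃ b, ∃ f ∈ I, (b, b') ∈ f.cols) :
    ∃ (e₁ : α ≃ α) (e₂ : β ≃ β), (∀ a b, C (e₁ a) (e₂ b) = C a b) ∧
      (∀ f ∈ I, ∀ p ∈ f.rows, e₁ p.1 = p.2) ∧ ∀ f ∈ I, ∀ q ∈ f.cols, e₂ q.1 = q.2 := by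
  let R := {p | ∃ f ∈ I, p ∈ f.rows}
  let S := {q | ∃ f ∈ I, q ∈ f.cols}
  have hR : ∀ p ∈ R, ∀ q ∈ R, p.1 = q.1 ↔ p.2 = q.2 := by
    rintro p ⟨f, hf, hp⟩ q ⟨g, hg, hq⟩
    obtain ⟨h, -, hfh, hgh⟩ := I.directed _ hf _ hg
    exact h.rows_bij p (hfh.1 hp) q (hgh.1 hq)
  have hS : ∀ p ∈ S, ∀ q ∈ S, p.1 = q.1 ↔ p.2 = q.2 := by
    rintro p ⟨f, hf, hp⟩ q ⟨g, hg, hq⟩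
    obtain ⟨h, -, hfh, hgh⟩ := I.directed _ hf _ hg
    exact h.cols_bij p (hfh.2 hp) q (hgh.2 hq)
  obtain ⟨e₁, he₁⟩ := exists_equiv_of_graph hR hrows hrows'
  obtain ⟨e₂, he₂⟩ := exists_equiv_of_graph hS hcols hcols'
  refine ⟨e₁, e₂, fun a b => ?_, fun f hf p hp => he₁ p ⟨f, hf, hp⟩,
    fun f hf q hq => he₂ q ⟨f, hf, hq⟩⟩
  obtain ⟨a', f, hf, ha⟩ := hrows a
  obtain ⟨b', g, hg, hb⟩ := hcols b
  obtain ⟨h, -, hfh, hgh⟩ := I.directed _ hf _ hg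
  rw [he₁ _ ⟨f, hf, ha⟩, he₂ _ ⟨g, hg, hb⟩]
  exact h.map_entry _ (hfh.1 ha) _ (hgh.2 hb)

def ofInjOn {s : Set α} {t : Set β} (hs : s.Finite) (ht : t.Finite) {π₁ : α → α} {π₂ : β → β}
    (h₁ : s.InjOn π₁) (h₂ : t.InjOn π₂) (hπ : ∀ a ∈ s, ∀ b ∈ t, C (π₁ a) (π₂ b) = C a b) :
    FinPartialIso C where
  rows := (fun a => (a, π₁ a)) '' s
  cols := (fun b => (b, π₂ b)) '' t
  rows_finite := hs.image _
  cols_finite := ht.image _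
  rows_bij := by
    rintro _ ⟨a, ha, rfl⟩ _ ⟨a', ha', rfl⟩
    exact ⟨congrArg π₁, fun h => h₁ ha ha' h⟩
  cols_bij := by
    rintro _ ⟨b, hb, rfl⟩ _ ⟨b', hb', rfl⟩
    exact ⟨congrArg π₂, fun h => h₂ hb hb' h⟩
  map_entry := by
    rintro _ ⟨a, ha, rfl⟩ _ ⟨b, hb, rfl⟩
    exact hπ a ha b hb

end FinPartialIso

open FinPartialIso in
theorem IsGeneric.exists_equiv_extending {C : α → β → γ} [Countable α] [Countable β]
    (hC : IsGeneric C) {s : Set α} {t : Set β} (hs : s.Finite) (ht : t.Finite)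
    {π₁ : α → α} {π₂ : β → β} (h₁ : s.InjOn π₁) (h₂ : t.InjOn π₂)
    (hπ : ∀ a ∈ s, ∀ b ∈ t, C (π₁ a) (π₂ b) = C a b) :
    ∃ (e₁ : α ≃ α) (e₂ : β ≃ β), (∀ a b, C (e₁ a) (e₂ b) = C a b) ∧
      s.EqOn e₁ π₁ ∧ t.EqOn e₂ π₂ := by
  have := Encodable.ofCountable α
  have := Encodable.ofCountable β
  let f₀ := ofInjOn hs ht h₁ h₂ hπ
  let D : (α ⊕ α) ⊕ (β ⊕ β) → Order.Cofinal (FinPartialIso C) :=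
    Sum.elim (Sum.elim (fun a => ⟨_, isCofinal_mem_rows hC.1 a⟩)
        (fun a' => ⟨_, isCofinal_mem_rows_snd hC.1 a'⟩))
      (Sum.elim (fun b => ⟨_, isCofinal_mem_cols hC.2 b⟩)
        (fun b' => ⟨_, isCofinal_mem_cols_snd hC.2 b'⟩))
  let I := Order.idealOfCofinals f₀ D
  have hmeet := Order.cofinal_meets_idealOfCofinals f₀ D
  obtain ⟨e₁, e₂, he, hrows, hcols⟩ := exists_equiv_of_ideal I
    (fun a => let ⟨f, ⟨a', h⟩, hf⟩ := hmeet (.inl (.inl a)); ⟨a', f, hf, h⟩)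
    (fun a' => let ⟨f, ⟨a, h⟩, hf⟩ := hmeet (.inl (.inr a')); ⟨a, f, hf, h⟩)
    (fun b => let ⟨f, ⟨b', h⟩, hf⟩ := hmeet (.inr (.inl b)); ⟨b', f, hf, h⟩)
    (fun b' => let ⟨f, ⟨b, h⟩, hf⟩ := hmeet (.inr (.inr b')); ⟨b, f, hf, h⟩)
  have hf₀ : f₀ ∈ I := Order.mem_idealOfCofinals f₀ D
  exact ⟨e₁, e₂, he, fun a ha => hrows f₀ hf₀ _ ⟨a, ha, rfl⟩,
    fun b hb => hcols f₀ hf₀ _ ⟨b, hb, rfl⟩⟩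

end BackAndForth

section ListPrefix

variable {α : Type*}

def commonPrefix [DecidableEq α] : List α → List α → List α
  | a :: s, b :: t => if a = b then a :: commonPrefix s t else []
  | _, _ => []

lemma commonPrefix_prefix_left [DecidableEq α] : ∀ s t : List α, commonPrefix s t <+: s
  | a :: s, b :: t => by
    unfold commonPrefix
    split_ifs
    · exact List.cons_prefix_cons.2 ⟨rfl, commonPrefix_prefix_left s t⟩
    · exact List.nil_prefix
  | [], _ => List.nil_prefix
  | _ :: _, [] => List.nil_prefix

lemma commonPrefix_prefix_right [DecidableEq α] : ∀ s t : List α, commonPrefix s t <+: t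
  | a :: s, b :: t => by
    unfold commonPrefix
    split_ifs with h
    · exact List.cons_prefix_cons.2 ⟨h, commonPrefix_prefix_right s t⟩
    · exact List.nil_prefix
  | [], _ => List.nil_prefix
  | _ :: _, [] => List.nil_prefix

lemma prefix_commonPrefix [DecidableEq α] :
    ∀ {w s t : List α}, w <+: s → w <+: t → w <+: commonPrefix s t
  | [], _, _, _, _ => List.nil_prefix
  | x :: w, a :: s, b :: t, hs, ht => by
    rw [List.cons_prefix_cons] at hs ht
    rw [commonPrefix, if_pos (hs.1.symm.trans ht.1)]
    exact List.cons_prefix_cons.2 ⟨hs.1, prefix_commonPrefix hs.2 ht.2⟩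
  | _ :: _, [], _, hs, _ => absurd hs (by simp)
  | _ :: _, _ :: _, [], _, ht => absurd ht (by simp)

lemma prefix_dropLast_of_ne {y s : List α} (h : y <+: s) (hne : y ≠ s) :
    y <+: s.dropLast := by
  have hlt : y.length < s.length := h.length_le.lt_of_ne fun h' => hne (h.eq_of_length h')
  exact List.prefix_of_prefix_length_le h (List.dropLast_prefix s) (by simp; omega)

lemma eq_concat_of_dropLast_eq {l s : List α} (h : l.dropLast = s) (hne : l ≠ s) :
    ∃ a, l = s ++ [a] := by
  have hl : l ≠ [] := by rintro rfl; exact hne h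
  exact ⟨l.getLast hl, by rw [← h, List.dropLast_append_getLast]⟩

end ListPrefix

def nodeOfCode (c n : ℕ) : List Bool :=
  match (Encodable.decode n : Option (List Bool)) with
  | some l => if l.length = c then l else List.replicate c false
  | none => List.replicate c false

lemma length_nodeOfCode (c n : ℕ) : (nodeOfCode c n).length = c := by
  unfold nodeOfCode
  split <;> [split_ifs <;> simp_all; simp]

lemma nodeOfCode_encode {l : List Bool} : nodeOfCode l.length (Encodable.encode l) = l := by
  simp [nodeOfCode]

lemma IsRowGeneric.infinite_setOf_nodeOfCode {α β : Type*} {C : α → β → ℕ}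
    (hC : IsRowGeneric C) {n ℓ : ℕ} {ι : Fin n → β} (hι : Function.Injective ι)
    {s : Fin n → List Bool} (hs : ∀ k, (s k).length = ℓ) :
    {a | ∀ k, nodeOfCode ℓ (C a (ι k)) = s k}.Infinite := by
  classical
  refine (hC (Finset.univ.image ι) (Function.extend ι (fun k => Encodable.encode (s k)) 0)).mono ?_
  intro a ha k
  rw [ha _ (Finset.mem_image_of_mem ι (Finset.mem_univ k)), hι.extend_apply, ← hs k,
    nodeOfCode_encode]

/-- `A c i` and `B c i` are the `i`-th elements of level `c` of the sorts `A` and `B`; the tree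
consists of the binary strings under the prefix order, the level of a string being its length;
`T none` and `L none` are the garbage points `g_T` and `g_L`. -/
inductive GenericModel : Type
  | A (level index : ℕ)
  | B (level index : ℕ)
  | T (node : Option (List Bool))
  | L (level : Option ℕ)

namespace GenericModel

@[simp]
def IsA : GenericModel → Prop
  | A .. => True
  | _ => False

@[simp]
def IsB : GenericModel → Prop
  | B .. => True
  | _ => False

@[simp]
def IsT : GenericModel → Prop
  | T _ => True
  | _ => False

@[simp]
def IsL : GenericModel → Prop
  | L _ => True
  | _ => False

@[simp]
def LeT : GenericModel → GenericModel → Prop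
  | T (some s), T (some t) => s <+: t
  | _, _ => False

@[simp]
def LeL : GenericModel → GenericModel → Prop
  | L (some m), L (some n) => m ≤ n
  | _, _ => False

@[simp]
def treeMeet : GenericModel → GenericModel → GenericModel
  | T (some s), T (some t) => T (some (commonPrefix s t))
  | _, _ => T none

def fApp : GenericModel → GenericModel → GenericModel
  | A c i, B c' j => if c = c' then T (some (nodeOfCode c (genericMatrix i j))) else T none
  | _, _ => T none

@[simp]
def treePred : GenericModel → GenericModel
  | T (some s) => T (some s.dropLast)
  | _ => T none

@[simp]
def levelPred : GenericModel → GenericModel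
  | L (some n) => L (some (n - 1))
  | _ => L none

@[simp]
def treeLevel : GenericModel → GenericModel
  | T (some s) => L (some s.length)
  | _ => L none

@[simp]
def levelA : GenericModel → GenericModel
  | A c _ => L (some c)
  | _ => L none

@[simp]
def levelB : GenericModel → GenericModel
  | B c _ => L (some c)
  | _ => L none

@[simps]
instance : TOps GenericModel where
  SA := IsA
  SB := IsB
  ST := IsT
  SL := IsL
  leT := LeT
  leL := LeL
  meet := treeMeet
  app := fApp
  predT := treePred
  predL := levelPred
  lT := treeLevel
  lA := levelA
  lB := levelB
  gT := T none
  root := T (some [])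
  gL := L none
  zero := L (some 0)

@[simp]
lemma fApp_A_B (c i j : ℕ) :
    fApp (A c i) (B c j) = T (some (nodeOfCode c (genericMatrix i j))) := by
  simp [fApp]

lemma exists_eq_B_of_fApp_A_ne {c i : ℕ} {x : GenericModel} (hx : fApp (A c i) x ≠ T none) :
    ∃ j, x = B c j := by
  rcases x with _ | ⟨c', j⟩ | _ | _ <;> simp_all [fApp]

lemma exists_eq_T {x : GenericModel} (h : IsT x) (hx : x ≠ T none) : ∃ s, x = T (some s) := by
  rcases x with _ | _ | (_ | s) | _ <;> simp_all

lemma exists_eq_L {x : GenericModel} (h : IsL x) (hx : x ≠ L none) : ∃ n, x = L (some n) := by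
  rcases x with _ | _ | _ | (_ | n) <;> simp_all

lemma exists_eq_A {x : GenericModel} (h : IsA x) : ∃ c i, x = A c i := by
  rcases x with _ | _ | _ | _ <;> simp_all

lemma exists_eq_B {x : GenericModel} (h : IsB x) : ∃ c j, x = B c j := by
  rcases x with _ | _ | _ | _ <;> simp_all

lemma exists_eq_T_of_leT {x y : GenericModel} (h : LeT x y) :
    ∃ s t, x = T (some s) ∧ y = T (some t) ∧ s <+: t := by
  rcases x with _ | _ | (_ | s) | _ <;> rcases y with _ | _ | (_ | t) | _ <;> simp_all

lemma exists_eq_L_of_leL {x y : GenericModel} (h : LeL x y) :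
    ∃ m n, x = L (some m) ∧ y = L (some n) ∧ m ≤ n := by
  rcases x with _ | _ | _ | (_ | m) <;> rcases y with _ | _ | _ | (_ | n) <;> simp_all

instance : TModel GenericModel where
  sorts_cover x := by cases x <;> simp
  disj_AB x := by cases x <;> simp
  disj_AT x := by cases x <;> simp
  disj_AL x := by cases x <;> simp
  disj_BT x := by cases x <;> simp
  disj_BL x := by cases x <;> simp
  disj_TL x := by cases x <;> simp
  gT_sort := trivial
  root_sort := trivial
  gL_sort := trivial
  zero_sort := trivial
  zero_ne_gL := by simp
  leL_dom x y h := by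
    obtain ⟨m, n, rfl, rfl, -⟩ := exists_eq_L_of_leL h
    simp
  leL_refl x h hx := by
    obtain ⟨n, rfl⟩ := exists_eq_L h hx
    exact le_refl n
  leL_antisymm x y h h' := by
    obtain ⟨m, n, rfl, rfl, hmn⟩ := exists_eq_L_of_leL h
    rw [le_antisymm hmn h']
  leL_trans x y z h h' := by
    obtain ⟨m, n, rfl, rfl, hmn⟩ := exists_eq_L_of_leL h
    obtain ⟨_, k, ⟨⟩, rfl, hnk⟩ := exists_eq_L_of_leL h'
    exact hmn.trans hnk
  leL_total x y hx hx' hy hy' := by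
    obtain ⟨m, rfl⟩ := exists_eq_L hx hx'
    obtain ⟨n, rfl⟩ := exists_eq_L hy hy'
    exact le_total m n
  zero_least x h hx := by
    obtain ⟨n, rfl⟩ := exists_eq_L h hx
    exact n.zero_le
  leL_no_max x h hx := by
    obtain ⟨n, rfl⟩ := exists_eq_L h hx
    exact ⟨L (some (n + 1)), trivial, by simp, n.le_succ, by simp⟩
  predL_zero := rfl
  predL_gL := rfl
  predL_junk x h := by cases x <;> simp_all
  predL_spec x h hx hx₀ := by
    obtain ⟨n, rfl⟩ := exists_eq_L h hx
    have hn : n ≠ 0 := by rintro rfl; exact hx₀ rfl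
    refine ⟨trivial, by simp, n.sub_le 1, by simp; omega, fun y hy => ?_⟩
    obtain ⟨m, _, rfl, ⟨⟩, hmn⟩ := exists_eq_L_of_leL hy
    rcases hmn.eq_or_lt with rfl | hlt
    · exact .inl rfl
    · exact .inr (show m ≤ n - 1 by omega)
  succL_exists x h hx := by
    obtain ⟨n, rfl⟩ := exists_eq_L h hx
    exact ⟨L (some (n + 1)), trivial, by simp, by simp, by simp, by simp⟩
  root_ne_gT := by simp
  leT_dom x y h := by
    obtain ⟨s, t, rfl, rfl, -⟩ := exists_eq_T_of_leT h
    simp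
  leT_refl x h hx := by
    obtain ⟨s, rfl⟩ := exists_eq_T h hx
    exact List.prefix_refl s
  leT_antisymm x y h h' := by
    obtain ⟨s, t, rfl, rfl, hst⟩ := exists_eq_T_of_leT h
    rw [hst.eq_of_length_le (List.IsPrefix.length_le h')]
  leT_trans x y z h h' := by
    obtain ⟨s, t, rfl, rfl, hst⟩ := exists_eq_T_of_leT h
    obtain ⟨_, u, ⟨⟩, rfl, htu⟩ := exists_eq_T_of_leT h'
    exact hst.trans htu
  root_least x h hx := by
    obtain ⟨s, rfl⟩ := exists_eq_T h hx
    exact List.nil_prefix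
  pred_linear x y z h h' := by
    obtain ⟨s, t, rfl, rfl, hst⟩ := exists_eq_T_of_leT h
    obtain ⟨u, _, rfl, ⟨⟩, hut⟩ := exists_eq_T_of_leT h'
    exact List.prefix_or_prefix_of_prefix hst hut
  meet_spec x y hx hx' hy hy' := by
    obtain ⟨s, rfl⟩ := exists_eq_T hx hx'
    obtain ⟨t, rfl⟩ := exists_eq_T hy hy'
    refine ⟨trivial, by simp, commonPrefix_prefix_left s t, commonPrefix_prefix_right s t,
      fun w hws hwt => ?_⟩
    obtain ⟨u, _, rfl, ⟨⟩, hus⟩ := exists_eq_T_of_leT hws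
    exact prefix_commonPrefix hus hwt
  meet_junk x y h := by
    rcases x with _ | _ | (_ | s) | _ <;> rcases y with _ | _ | (_ | t) | _ <;> simp_all
  predT_root := rfl
  predT_gT := rfl
  predT_junk x h := by cases x <;> simp_all
  predT_spec x h hx hx₀ := by
    obtain ⟨s, rfl⟩ := exists_eq_T h hx
    have hs : s ≠ [] := by rintro rfl; exact hx₀ rfl
    refine ⟨trivial, by simp, List.dropLast_prefix s, fun h' => ?_, fun y hy => ?_⟩
    · have := congrArg List.length (T.inj h' |> Option.some.inj)
      simp only [List.length_dropLast] at this
      exact hs (List.length_eq_zero_iff.1 (by omega))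
    · obtain ⟨u, _, rfl, ⟨⟩, hus⟩ := exists_eq_T_of_leT hy
      by_cases hu : u = s
      · exact .inl (hu ▸ rfl)
      · exact .inr (prefix_dropLast_of_ne hus hu)
  ramification x h hx := by
    obtain ⟨s, rfl⟩ := exists_eq_T h hx
    refine ⟨T (some (s ++ [false])), T (some (s ++ [true])), by simp,
      ⟨trivial, by simp, by simp, by simp⟩, ⟨trivial, by simp, by simp, by simp⟩,
      fun w hw hw' hwx hwx' => ?_⟩
    obtain ⟨l, rfl⟩ := exists_eq_T hw hw'
    obtain ⟨b, rfl⟩ := eq_concat_of_dropLast_eq (l := l) (s := s) (by simpa using hwx)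
      (fun h => hwx' (h ▸ rfl))
    cases b <;> simp
  lT_gT := rfl
  lT_junk x h := by cases x <;> simp_all
  lT_sort x h hx := by
    obtain ⟨s, rfl⟩ := exists_eq_T h hx
    simp
  lT_surj c h hc := by
    obtain ⟨n, rfl⟩ := exists_eq_L h hc
    exact ⟨T (some (List.replicate n false)), trivial, by simp, by simp⟩
  lT_mono t y z hy hz := by
    obtain ⟨s, u, rfl, rfl, hsu⟩ := exists_eq_T_of_leT hy
    obtain ⟨s', _, rfl, ⟨⟩, hs'u⟩ := exists_eq_T_of_leT hz
    exact ⟨List.IsPrefix.length_le, List.prefix_of_prefix_length_le hsu hs'u⟩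
  lT_initial t c h ht hc := by
    obtain ⟨s, rfl⟩ := exists_eq_T h ht
    obtain ⟨m, _, rfl, ⟨⟩, hm⟩ := exists_eq_L_of_leL hc
    exact ⟨T (some (s.take m)), List.take_prefix m s, by simp [hm]⟩
  lT_ext t c h ht hc := by
    obtain ⟨s, rfl⟩ := exists_eq_T h ht
    obtain ⟨_, n, ⟨⟩, rfl, hn⟩ := exists_eq_L_of_leL hc
    refine ⟨T (some (s ++ List.replicate (n - s.length) false)), List.prefix_append _ _, ?_⟩
    simp
    omega
  lA_sort a h := by
    obtain ⟨c, i, rfl⟩ := exists_eq_A h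
    simp
  lA_junk x h := by cases x <;> simp_all
  lB_sort b h := by
    obtain ⟨c, j, rfl⟩ := exists_eq_B h
    simp
  lB_junk x h := by cases x <;> simp_all
  fiberA_infinite c h hc := by
    obtain ⟨ℓ, rfl⟩ := exists_eq_L h hc
    refine (Set.infinite_range_of_injective fun i j (h : A ℓ i = A ℓ j) => (A.inj h).2).mono ?_
    rintro _ ⟨i, rfl⟩
    exact ⟨trivial, rfl⟩
  fiberB_infinite c h hc := by
    obtain ⟨ℓ, rfl⟩ := exists_eq_L h hc
    refine (Set.infinite_range_of_injective fun i j (h : B ℓ i = B ℓ j) => (B.inj h).2).mono ?_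
    rintro _ ⟨i, rfl⟩
    exact ⟨trivial, rfl⟩
  app_eq_gT_iff a b ha hb := by
    obtain ⟨c, i, rfl⟩ := exists_eq_A ha
    obtain ⟨c', j, rfl⟩ := exists_eq_B hb
    by_cases hc : c = c' <;> simp [fApp, hc]
  app_junk a b h := by
    rcases a with _ | _ | _ | _ <;> rcases b with _ | _ | _ | _ <;> simp_all [fApp]
  app_level a b ha hb hab := by
    obtain ⟨c, i, rfl⟩ := exists_eq_A ha
    obtain ⟨c', j, rfl⟩ := exists_eq_B hb
    obtain rfl : c = c' := by simpa using hab
    simp [length_nodeOfCode]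
  generic_B c hc hc' n t a ht ha ha_inj := by
    obtain ⟨ℓ, rfl⟩ := exists_eq_L hc hc'
    choose s hs using fun k => exists_eq_T (ht k).1 (ht k).2.1
    choose c ι hι using fun k => exists_eq_A (ha k).1
    have hlen (k) : (s k).length = ℓ := by simpa [hs] using (ht k).2.2
    have hc (k) : c k = ℓ := by simpa [hι] using (ha k).2
    have hι_inj : Function.Injective ι := fun k k' h => ha_inj (by rw [hι, hι, hc, hc, h])
    refine ((isGeneric_genericMatrix.2.infinite_setOf_nodeOfCode hι_inj hlen).image
      fun j _ j' _ (h : B ℓ j = B ℓ j') => (B.inj h).2).mono ?_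
    rintro _ ⟨j, hj, rfl⟩
    exact ⟨trivial, fun k => by simp [hι, hc, hs, ← hj k, flip]⟩
  generic_A c hc hc' n t b ht hb hb_inj := by
    obtain ⟨ℓ, rfl⟩ := exists_eq_L hc hc'
    choose s hs using fun k => exists_eq_T (ht k).1 (ht k).2.1
    choose c ι hι using fun k => exists_eq_B (hb k).1
    have hlen (k) : (s k).length = ℓ := by simpa [hs] using (ht k).2.2
    have hc (k) : c k = ℓ := by simpa [hι] using (hb k).2
    have hι_inj : Function.Injective ι := fun k k' h => hb_inj (by rw [hι, hι, hc, hc, h])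
    refine ((isGeneric_genericMatrix.1.infinite_setOf_nodeOfCode hι_inj hlen).image
      fun i _ i' _ (h : A ℓ i = A ℓ i') => (A.inj h).2).mono ?_
    rintro _ ⟨i, hi, rfl⟩
    exact ⟨trivial, fun k => by simp [hι, hc, hs, ← hi k]⟩

def relabel (e₁ e₂ : ℕ ≃ ℕ) : GenericModel → GenericModel
  | A c i => A c (e₁ i)
  | B c j => B c (e₂ j)
  | x => x

def relabelEquiv (e₁ e₂ : ℕ ≃ ℕ) (he : ∀ i j, genericMatrix (e₁ i) (e₂ j) = genericMatrix i j) :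
    GenericModel ≃[tLang] GenericModel where
  toFun := relabel e₁ e₂
  invFun := relabel e₁.symm e₂.symm
  left_inv x := by cases x <;> simp [relabel]
  right_inv x := by cases x <;> simp [relabel]
  map_fun' {n} f x := by
    cases f <;> simp only [Structure.funMap, Function.comp_apply] <;> try rfl
    all_goals
      rcases x 0 with _ | _ | (_ | _) | (_ | _) <;>
        try rcases x 1 with _ | _ | (_ | _) | (_ | _)
    all_goals try rfl
    simp only [relabel, TOps.app, fApp, he]
    split_ifs <;> rfl
  map_rel' {n} r x := by
    cases r <;> simp only [Structure.RelMap, Function.comp_apply] <;>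
      rcases x 0 with _ | _ | (_ | _) | (_ | _) <;> try rcases x 1 with _ | _ | (_ | _) | (_ | _)
    all_goals exact Iff.rfl

def index : GenericModel → ℕ
  | A _ i => i
  | B _ j => j
  | _ => 0

lemma relabel_eq_self {e₁ e₂ : ℕ ≃ ℕ} {x : GenericModel} (h₁ : e₁ x.index = x.index)
    (h₂ : e₂ x.index = x.index) : relabel e₁ e₂ x = x := by
  cases x <;> simp_all [relabel, index]

end GenericModel

open GenericModel

def bitCode (b : Bool) : ℕ := Encodable.encode [b]

@[simp]
lemma nodeOfCode_one_bitCode (b : Bool) : nodeOfCode 1 (bitCode b) = [b] :=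
  nodeOfCode_encode (l := [b])

def rowType (R : Finset ℕ) : Set (Fin 1 → GenericModel) :=
  {w | ∀ r ∈ R, fApp (A 1 r) (w 0) = T (some [false])}

lemma definable_setOf_app_eq {M : Type*} [TOps M] (a t : M) :
    Set.Definable (Set.univ : Set M) tLang {w : Fin 1 → M | TOps.app a (w 0) = t} := by
  rw [Set.definable_iff_exists_formula_sum]
  refine ⟨Term.equal (Term.func (TFunc.app : tLang.Functions 2)
    ![Term.var (Sum.inl ⟨a, trivial⟩), Term.var (Sum.inr 0)]) (Term.var (Sum.inl ⟨t, trivial⟩)), ?_⟩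
  ext w
  exact Iff.rfl

lemma definable_rowType (R : Finset ℕ) :
    Set.Definable (Set.univ : Set GenericModel) tLang (rowType R) := by
  have : rowType R = ⋂ r ∈ R, {w | TOps.app (A 1 r) (w 0) = T (some [false])} := by
    ext w
    simp [rowType]
  rw [this]
  exact Set.definable_biInter_finset (fun r => definable_setOf_app_eq _ _) R

def phi : tLang.Formula (Fin 2 ⊕ Fin 1) :=
  let fv (k : Fin 2) : tLang.Term (Fin 2 ⊕ Fin 1) :=
    Term.func (TFunc.app : tLang.Functions 2) ![Term.var (Sum.inl k), Term.var (Sum.inr 0)]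
  (fv 0).equal (fv 1) ⊓ ∼((fv 0).equal (Term.func (TFunc.gT : tLang.Functions 0) ![]))

lemma realize_phi {M : Type*} [TOps M] (v : Fin 2 → M) (w : Fin 1 → M) :
    phi.Realize (Sum.elim v w) ↔
      TOps.app (v 0) (w 0) = TOps.app (v 1) (w 0) ∧ TOps.app (v 0) (w 0) ≠ TOps.gT := by
  simp only [phi, Formula.realize_inf, Formula.realize_not, Formula.realize_equal]
  exact Iff.rfl

lemma isPhiType_rowType {R : Finset ℕ} (hR : R.Nonempty) :
    IsPhiType GenericModel phi (rowType R) := by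
  classical
  intro F G hF hG
  obtain ⟨r, hr⟩ := hR
  let s := (F ∪ G).image fun w => (w 0).index
  obtain ⟨i₁, hi₁⟩ :=
    (isGeneric_genericMatrix.1 s fun j => bitCode ((fun _ => B 1 j) ∉ F)).nonempty
  obtain ⟨i₂, hi₂⟩ := (isGeneric_genericMatrix.1 s fun _ => bitCode false).nonempty
  have hcol {w j} (hw : w ∈ F ∪ G) (hj : w 0 = B 1 j) :
      fApp (A 1 i₁) (w 0) = T (some [decide (w ∉ F)]) ∧
        fApp (A 1 i₂) (w 0) = T (some [false]) := by
    have hjs : j ∈ s := Finset.mem_image.2 ⟨w, hw, by rw [hj]; rfl⟩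
    have hw' : (fun _ => B 1 j) = w := funext fun k => by rw [Subsingleton.elim k 0, hj]
    rw [hj, fApp_A_B, fApp_A_B, hi₁ j hjs, hi₂ j hjs, hw', nodeOfCode_one_bitCode,
      nodeOfCode_one_bitCode]
    exact ⟨rfl, rfl⟩
  refine ⟨![A 1 i₁, A 1 i₂], fun w hw => ?_, fun w hw => ?_⟩
  · obtain ⟨j, hj⟩ := exists_eq_B_of_fApp_A_ne ((hF hw r hr).trans_ne (by simp))
    obtain ⟨h₁, h₂⟩ := hcol (Finset.mem_union_left _ hw) hj
    simp [realize_phi, h₁, h₂, hw]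
  · rw [realize_phi]
    by_cases h : fApp (A 1 i₁) (w 0) = T none
    · exact fun h' => h'.2 h
    obtain ⟨j, hj⟩ := exists_eq_B_of_fApp_A_ne h
    obtain ⟨h₁, h₂⟩ := hcol (Finset.mem_union_right _ hw) hj
    have hwF : w ∉ F := fun hwF => hG w hw (hF hwF)
    simp [h₁, h₂, hwF]

lemma realize_sumElim_comp_of_fixed {L : Language} {M α β : Type*} [L.Structure M]
    (σ : M ≃[L] M) (ψ : L.Formula (α ⊕ β)) {c : β → M} (hc : ∀ k, σ (c k) = c k) (w : α → M) :
    ψ.Realize (Sum.elim (σ ∘ w) c) ↔ ψ.Realize (Sum.elim w c) := by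
  have : Sum.elim (σ ∘ w) c = σ ∘ Sum.elim w c := by
    ext (k | k)
    · rfl
    · exact (hc k).symm
  rw [this, StrongHomClass.realize_formula]

lemma exists_equiv_fixing_not_mem_rowType {u : ℕ} (c : Fin u → GenericModel) {R : Finset ℕ}
    (hR : u < R.card) : ∃ (σ : GenericModel ≃[tLang] GenericModel) (w : Fin 1 → GenericModel),
      (∀ k, σ (c k) = c k) ∧ w ∈ rowType R ∧ σ ∘ w ∉ rowType R := by
  classical
  let P := Finset.univ.image fun k => (c k).index
  obtain ⟨r, hrR, hrP⟩ := Finset.exists_mem_notMem_of_card_lt_card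
    ((Finset.card_image_le.trans (by simp)).trans_lt hR : P.card < R.card)
  obtain ⟨a, ha, haPR⟩ :=
    (isGeneric_genericMatrix.1 P (genericMatrix r)).exists_notMem_finset (P ∪ R)
  have haP : a ∉ P := fun h => haPR (Finset.mem_union_left _ h)
  have haR : a ∉ R := fun h => haPR (Finset.mem_union_right _ h)
  have hswap : ∀ i ∈ P, Equiv.swap a r i = i := fun i hi =>
    Equiv.swap_apply_of_ne_of_ne (ne_of_mem_of_not_mem hi haP) (ne_of_mem_of_not_mem hi hrP)
  obtain ⟨e₁, e₂, he, he₁, he₂⟩ := isGeneric_genericMatrix.exists_equiv_extending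
    (s := ↑(insert a P)) (t := ↑P) (Finset.finite_toSet _) (Finset.finite_toSet _)
    (Equiv.swap a r).injective.injOn Function.injective_id.injOn (by
      rintro i hi j hj
      rcases Finset.mem_insert.1 hi with rfl | hi
      · simp [ha j hj]
      · simp [hswap i hi])
  obtain ⟨j, hj⟩ := (isGeneric_genericMatrix.2 (insert a R) fun i => bitCode (i = a)).nonempty
  refine ⟨relabelEquiv e₁ e₂ he, fun _ => B 1 j, fun k => ?_, fun i hi => ?_, fun h => ?_⟩
  · have hk : (c k).index ∈ P := Finset.mem_image_of_mem _ (Finset.mem_univ k)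
    exact relabel_eq_self
      ((he₁ (Finset.mem_coe.2 (Finset.mem_insert_of_mem hk))).trans (hswap _ hk)) (he₂ hk)
  · have hij : genericMatrix i j = bitCode false := by
      simpa [flip, ne_of_mem_of_not_mem hi haR] using hj i (Finset.mem_insert_of_mem hi)
    simp [hij]
  · have hr : e₁ a = r := (he₁ (Finset.mem_coe.2 (Finset.mem_insert_self a P))).trans (by simp)
    have haj : genericMatrix a j = bitCode true := by
      simpa [flip] using hj a (Finset.mem_insert_self a R)
    have := h r hrR
    rw [← hr] at this
    change fApp (A 1 (e₁ a)) (B 1 (e₂ j)) = _ at this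
    simp [he, haj] at this

/-- **`T` does not have uniform definability of types**: some formula `φ(v; w)` admits no
uniform definition `ψ(w; u)` for the `φ`-definitions of all definable `φ`-types over all
models of `T`. -/
theorem tTheory_no_uniform_definability_of_types :
    ∃ (n m : ℕ) (φ : tLang.Formula (Fin n ⊕ Fin m)),
      ¬ ∃ (u : ℕ) (ψ : tLang.Formula (Fin m ⊕ Fin u)),
        ∀ (M : Type) [TModel M] (q : Set (Fin m → M)),
          IsPhiType M φ q → Set.Definable (Set.univ : Set M) tLang q →
          ∃ c : Fin u → M, q = {b : Fin m → M | ψ.Realize (Sum.elim b c)} := by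
  refine ⟨2, 1, phi, fun ⟨u, ψ, hψ⟩ => ?_⟩
  let R := Finset.range (u + 1)
  obtain ⟨c, hc⟩ := hψ GenericModel (rowType R) (isPhiType_rowType ⟨0, by simp [R]⟩)
    (definable_rowType R)
  obtain ⟨σ, w, hσc, hw, hσw⟩ := exists_equiv_fixing_not_mem_rowType c (by simp [R] : u < R.card)
  rw [hc] at hw hσw
  exact hσw ((realize_sumElim_comp_of_fixed σ ψ hσc w).2 hw)

end BPPaper
end
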